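/- Let G be a real p×s matrix and r ≤ s with rank(G) ≤ r. Suppose (U*, V*) ∈ ℝ^{p×r} × ℝ^{s×r} is a global minimizer of ‖U‖₁ over the set F₂ = {(U, V) : G = U Vᵀ, Vᵀ V = I_r}. Then U* = G V*, and V* is a global minimizer of ‖G V‖₁ over the set F₁ = {V ∈ ℝ^{s×r} : Vᵀ V = I_r, ‖G V‖_F = ‖G‖_F}. -/
import Mathlib


open Matrix BigOperators

/-- The Frobenius norm of a real matrix, `‖M‖_F = sqrt (trace (Mᵀ M))`. -/
noncomputable def frobNorm {p q : ℕ} (M : Matrix (Fin p) (Fin q) ℝ) : ℝ :=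
  Real.sqrt ((Mᵀ * M).trace)

/-- The entrywise ℓ₁ norm of a real matrix. -/
def l1Norm {p q : ℕ} (M : Matrix (Fin p) (Fin q) ℝ) : ℝ :=
  ∑ i, ∑ j, |M i j|

lemma trace_sq {p q : ℕ} (M : Matrix (Fin p) (Fin q) ℝ) :
    (Mᵀ * M).trace = ∑ j, ∑ i, (M i j)^2 := by
  simp [Matrix.trace, Matrix.mul_apply, Matrix.diag, sq]

lemma trace_sq_nonneg {p q : ℕ} (M : Matrix (Fin p) (Fin q) ℝ) :
    0 ≤ (Mᵀ * M).trace := by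
  rw [trace_sq]
  positivity

lemma eq_zero_of_trace_sq {p q : ℕ} (M : Matrix (Fin p) (Fin q) ℝ)
    (h : (Mᵀ * M).trace = 0) : M = 0 := by
  rw [trace_sq] at h
  ext i j
  have h1 : ∀ j ∈ Finset.univ, (0:ℝ) ≤ ∑ i, (M i j)^2 := by
    intro j _; positivity
  have h2 := (Finset.sum_eq_zero_iff_of_nonneg h1).1 h j (Finset.mem_univ j)
  have h3 : ∀ i ∈ Finset.univ, (0:ℝ) ≤ (M i j)^2 := by intro i _; positivity
  have := (Finset.sum_eq_zero_iff_of_nonneg h3).1 h2 i (Finset.mem_univ i)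
  simpa [sq] using pow_eq_zero_iff (n := 2) (by norm_num) |>.1 this

/-- Backward direction of Theorem 2 of the paper: if `(U*, V*)` globally minimizes
`‖U‖₁` over `F₂ = {(U, V) : G = U Vᵀ, Vᵀ V = I}`, then `U* = G V*` and `V*` globally
minimizes `‖G V‖₁` over `F₁ = {V : Vᵀ V = I, ‖G V‖_F = ‖G‖_F}`. -/
theorem minimizer_F2_to_F1 {p s r : ℕ} (hrs : r ≤ s)
    (G : Matrix (Fin p) (Fin s) ℝ) (hrank : G.rank ≤ r)
    (Ustar : Matrix (Fin p) (Fin r) ℝ) (Vstar : Matrix (Fin s) (Fin r) ℝ)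
    (hfeas₁ : G = Ustar * Vstarᵀ) (hfeas₂ : Vstarᵀ * Vstar = 1)
    (hmin : ∀ (U : Matrix (Fin p) (Fin r) ℝ) (V : Matrix (Fin s) (Fin r) ℝ),
      G = U * Vᵀ → Vᵀ * V = 1 → l1Norm Ustar ≤ l1Norm U) :
    Ustar = G * Vstar ∧
    (Vstarᵀ * Vstar = 1 ∧ frobNorm (G * Vstar) = frobNorm G) ∧
    ∀ V : Matrix (Fin s) (Fin r) ℝ,
      Vᵀ * V = 1 → frobNorm (G * V) = frobNorm G →
      l1Norm (G * Vstar) ≤ l1Norm (G * V) := by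
  have hU : Ustar = G * Vstar := by
    rw [hfeas₁, Matrix.mul_assoc, hfeas₂, Matrix.mul_one]
  have htr : ((G * Vstar)ᵀ * (G * Vstar)).trace = (Gᵀ * G).trace := by
    have key : Gᵀ * G = Vstar * (Ustarᵀ * Ustar) * Vstarᵀ := by
      rw [hfeas₁]; simp [Matrix.transpose_mul, Matrix.mul_assoc]
    calc ((G * Vstar)ᵀ * (G * Vstar)).trace = (Ustarᵀ * Ustar).trace := by rw [← hU]
      _ = ((Vstarᵀ * Vstar) * (Ustarᵀ * Ustar)).trace := by rw [hfeas₂, Matrix.one_mul]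
      _ = (Vstar * (Ustarᵀ * Ustar) * Vstarᵀ).trace := by
            rw [Matrix.mul_assoc, Matrix.trace_mul_comm]
      _ = (Gᵀ * G).trace := by rw [key]
  refine ⟨hU, ⟨hfeas₂, by rw [frobNorm, frobNorm, htr]⟩, ?_⟩
  intro V hV hF
  -- traces equal
  have htr2 : ((G * V)ᵀ * (G * V)).trace = (Gᵀ * G).trace := by
    have := hF
    rw [frobNorm, frobNorm] at this
    have h1 := trace_sq_nonneg (G * V)
    have h2 := trace_sq_nonneg G
    exact (Real.sqrt_inj h1 h2).mp this
  -- show G = (G*V)*Vᵀ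
  have hD : G - G * V * Vᵀ = 0 := by
    apply eq_zero_of_trace_sq
    have expand : (G - G * V * Vᵀ)ᵀ * (G - G * V * Vᵀ) =
        Gᵀ * G - Gᵀ * (G * V * Vᵀ) - (G * V * Vᵀ)ᵀ * G
          + (G * V * Vᵀ)ᵀ * (G * V * Vᵀ) := by
      simp [Matrix.sub_mul, Matrix.mul_sub, Matrix.transpose_sub]
      abel
    rw [expand]
    have e1 : (Gᵀ * (G * V * Vᵀ)).trace = ((G * V)ᵀ * (G * V)).trace := by
      rw [Matrix.transpose_mul]
      rw [show Gᵀ * (G * V * Vᵀ) = (Gᵀ * (G * V)) * Vᵀ by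
        simp [Matrix.mul_assoc]]
      rw [Matrix.trace_mul_comm, ← Matrix.mul_assoc]
    have e2 : ((G * V * Vᵀ)ᵀ * G).trace = ((G * V)ᵀ * (G * V)).trace := by
      rw [show (G * V * Vᵀ)ᵀ * G = V * ((G * V)ᵀ * G) by
        simp [Matrix.transpose_mul, Matrix.mul_assoc]]
      rw [Matrix.trace_mul_comm, Matrix.mul_assoc]
    have e3 : ((G * V * Vᵀ)ᵀ * (G * V * Vᵀ)).trace = ((G * V)ᵀ * (G * V)).trace := by
      rw [Matrix.transpose_mul]
      rw [show Vᵀᵀ * (G * V)ᵀ * (G * V * Vᵀ) = V * ((G * V)ᵀ * (G * V)) * Vᵀ by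
        simp [Matrix.mul_assoc]]
      rw [Matrix.trace_mul_comm, ← Matrix.mul_assoc, ← Matrix.mul_assoc, hV,
        Matrix.one_mul]
    rw [Matrix.trace_add, Matrix.trace_sub, Matrix.trace_sub, e1, e2, e3, htr2]
    ring
  have hG : G = (G * V) * Vᵀ := sub_eq_zero.mp hD
  have := hmin (G * V) V hG hV
  rwa [hU] at this
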